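/- arXiv:math/0611831 — 2 statements merged into one kernel-verified Lean document; each statement's English description precedes it below -/
import Mathlib

section
/- Up to isomorphism, there is exactly one non-Lie nulfiliform Leibniz algebra of dimension n over ℂ, given by [e_i, e_1] = e_{i+1} for 1 ≤ i ≤ n−1 on a basis e₁,…,e_n (all other products zero). -/
/-- The lower central series of a (Leibniz) bracket: `lcs b 0 = L = L¹`,
`lcs b k = L^{k+1} = [L^k, L]`. -/
noncomputable def lcs {L : Type*} [AddCommGroup L] [Module ℂ L]
    (b : L →ₗ[ℂ] L →ₗ[ℂ] L) : ℕ → Submodule ℂ L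
  | 0 => ⊤
  | k + 1 => Submodule.span ℂ {z : L | ∃ x ∈ lcs b k, ∃ y : L, z = b x y}

/-!
Pick `e ∉ L²`; since `L²` has codimension one, `L = ℂ e + L²`. The Leibniz identity gives
`[L^k, L²] ⊆ L^{k+2}`, hence `L^k = ℂ eᵏ + L^{k+1}` for the right-normed powers
`e¹ = e`, `eᵏ⁺¹ = [eᵏ, e]`, so `e¹, …, eⁿ` span `L` and, by counting dimensions,
form a basis.
Finally, the Leibniz identity makes every `eᵏ` with `k ≥ 2` a right annihilator:
`[x, [y, y]] = [[x, y], y] - [[x, y], y] = 0`, and inductively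
`[x, [eᵏ, e]] = [[x, eᵏ], e] - [[x, e], eᵏ] = 0`.
-/

theorem Submodule.exists_span_singleton_sup_eq_top {K V : Type*} [Field K] [AddCommGroup V]
    [Module K V] [FiniteDimensional K V] (W : Submodule K V)
    (hW : Module.finrank K W + 1 = Module.finrank K V) :
    ∃ e : V, K ∙ e ⊔ W = ⊤ := by
  obtain ⟨e, -, he⟩ : ∃ e ∈ (⊤ : Submodule K V), e ∉ W :=
    SetLike.exists_of_lt (lt_top_iff_ne_top.2 fun h => by rw [h, finrank_top] at hW; omega)
  refine ⟨e, Submodule.eq_top_of_finrank_eq (le_antisymm (Submodule.finrank_le _) ?_)⟩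
  have hlt : W < K ∙ e ⊔ W :=
    lt_of_le_of_ne le_sup_right fun h =>
      he (h ▸ Submodule.mem_sup_left (Submodule.mem_span_singleton_self e))
  have := Submodule.finrank_lt_finrank_of_lt hlt
  omega

section Leibniz

variable {L : Type*} [AddCommGroup L] [Module ℂ L] (b : L →ₗ[ℂ] L →ₗ[ℂ] L)

open Submodule

def IsLeibniz : Prop :=
  ∀ x y z : L, b x (b y z) = b (b x y) z - b (b x z) y

/-- `rightPow b e k` is the right-normed power `e^{k+1}` (indexed from `0`). -/
def rightPow (e : L) : ℕ → L
  | 0 => e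
  | k + 1 => b (rightPow e k) e

theorem bracket_mem_lcs_succ {k : ℕ} {x : L} (hx : x ∈ lcs b k) (y : L) :
    b x y ∈ lcs b (k + 1) :=
  subset_span ⟨x, hx, y, rfl⟩

theorem lcs_succ_le (k : ℕ) : lcs b (k + 1) ≤ lcs b k := by
  induction k with
  | zero => exact le_top
  | succ k ih =>
    refine span_le.2 ?_
    rintro _ ⟨x, hx, y, rfl⟩
    exact bracket_mem_lcs_succ b (ih hx) y

theorem rightPow_mem_lcs (e : L) (k : ℕ) : rightPow b e k ∈ lcs b k := by
  induction k with
  | zero => exact mem_top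
  | succ k ih => exact bracket_mem_lcs_succ b ih e

variable {b}

theorem bracket_mem_lcs_add_two (hb : IsLeibniz b) {k : ℕ} {x v : L} (hx : x ∈ lcs b k)
    (hv : v ∈ lcs b 1) : b x v ∈ lcs b (k + 2) := by
  suffices lcs b 1 ≤ (lcs b (k + 2)).comap (b x) from this hv
  refine span_le.2 ?_
  rintro _ ⟨p, -, q, rfl⟩
  rw [SetLike.mem_coe, mem_comap, hb]
  exact sub_mem (bracket_mem_lcs_succ b (bracket_mem_lcs_succ b hx p) q)
    (bracket_mem_lcs_succ b (bracket_mem_lcs_succ b hx q) p)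

theorem bracket_rightPow_succ_eq_zero (hb : IsLeibniz b) (e x : L) (j : ℕ) :
    b x (rightPow b e (j + 1)) = 0 := by
  induction j generalizing x with
  | zero => simp [rightPow, hb x e e]
  | succ j ih =>
    change b x (b (rightPow b e (j + 1)) e) = 0
    rw [hb, ih, ih, map_zero, LinearMap.zero_apply, sub_zero]

theorem lcs_eq_span_rightPow_sup (hb : IsLeibniz b) {e : L} (he : ℂ ∙ e ⊔ lcs b 1 = ⊤)
    (k : ℕ) : lcs b k = ℂ ∙ rightPow b e k ⊔ lcs b (k + 1) := by
  induction k with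
  | zero => exact he.symm
  | succ k ih =>
    refine le_antisymm ?_ (sup_le ?_ (lcs_succ_le b _))
    · set S := ℂ ∙ rightPow b e (k + 1) ⊔ lcs b (k + 2)
      have hpow : ∀ y, b (rightPow b e k) y ∈ S := by
        have : ℂ ∙ e ⊔ lcs b 1 ≤ S.comap (b (rightPow b e k)) :=
          sup_le (span_singleton_le_iff_mem _ _ |>.2 <|
              mem_sup_left (mem_span_singleton_self _))
            fun v hv => mem_sup_right (bracket_mem_lcs_add_two hb (rightPow_mem_lcs b e k) hv)
        exact fun y => this (he ▸ mem_top)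
      have hlcs : ∀ y, lcs b k ≤ S.comap (b.flip y) := fun y => by
        rw [ih]
        exact sup_le (span_singleton_le_iff_mem _ _ |>.2 (hpow y))
          fun w hw => mem_sup_right (bracket_mem_lcs_succ b hw y)
      refine span_le.2 ?_
      rintro _ ⟨x, hx, y, rfl⟩
      exact hlcs y hx
    · exact span_singleton_le_iff_mem _ _ |>.2 (rightPow_mem_lcs b e _)

theorem span_rightPow_sup_lcs_eq_top (hb : IsLeibniz b) {e : L} (he : ℂ ∙ e ⊔ lcs b 1 = ⊤)
    (m : ℕ) : span ℂ (Set.range fun i : Fin m => rightPow b e i) ⊔ lcs b m = ⊤ := by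
  induction m with
  | zero => exact top_le_iff.1 le_sup_right
  | succ m ih =>
    refine top_le_iff.1 ?_
    rw [← ih, lcs_eq_span_rightPow_sup hb he m, ← sup_assoc]
    refine sup_le_sup_right (sup_le (span_mono ?_) ?_) _
    · rintro _ ⟨i, rfl⟩
      exact ⟨i.castSucc, rfl⟩
    · exact span_singleton_le_iff_mem _ _ |>.2 (subset_span ⟨Fin.last m, rfl⟩)

theorem bracket_rightPow_eq (hb : IsLeibniz b) {e : L} {m : ℕ} (hm : rightPow b e m = 0)
    (i j : Fin m) :
    b (rightPow b e i) (rightPow b e j) =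
      if (j : ℕ) = 0 then
        (if (i : ℕ) + 1 < m then rightPow b e (i + 1) else 0)
      else 0 := by
  obtain ⟨_ | j, -⟩ := j
  · have : (i : ℕ) + 1 < m ∨ (i : ℕ) + 1 = m := by omega
    rcases this with h | h
    · simp [h, rightPow]
    · simp [← h, rightPow] at hm ⊢
      exact hm
  · simp [bracket_rightPow_succ_eq_zero hb]

end Leibniz

theorem stmt_11_general {L : Type*} [AddCommGroup L] [Module ℂ L] [FiniteDimensional ℂ L]
    (b : L →ₗ[ℂ] L →ₗ[ℂ] L)
    (hLeib : ∀ x y z : L, b x (b y z) = b (b x y) z - b (b x z) y)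
    (n : ℕ) (hn : 0 < n) (hdim : Module.finrank ℂ L = n)
    (hnul : ∀ i : ℕ, 2 ≤ i → i ≤ n + 1 →
      Module.finrank ℂ (lcs b (i - 1)) + i = n + 1) :
    ∃ e : Module.Basis (Fin n) ℂ L, ∀ i j : Fin n,
      b (e i) (e j) =
        if (j : ℕ) = 0 then
          (if h : (i : ℕ) + 1 < n then e ⟨(i : ℕ) + 1, h⟩ else 0)
        else 0 := by
  have hbot : lcs b n = ⊥ := by
    have : Module.finrank ℂ (lcs b n) + (n + 1) = n + 1 := hnul (n + 1) (by omega) le_rfl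
    exact Submodule.finrank_eq_zero.1 (by omega)
  obtain ⟨e, he⟩ := (lcs b 1).exists_span_singleton_sup_eq_top (by
    have : Module.finrank ℂ (lcs b 1) + 2 = n + 1 := hnul 2 le_rfl (by omega)
    omega)
  have hspan : ⊤ ≤ Submodule.span ℂ (Set.range fun i : Fin n => rightPow b e i) := by
    simpa [hbot] using (span_rightPow_sup_lcs_eq_top hLeib he n).ge
  have hzero : rightPow b e n = 0 := by
    simpa [hbot] using rightPow_mem_lcs b e n
  refine ⟨basisOfTopLeSpanOfCardEqFinrank _ hspan (by simp [hdim]), fun i j => ?_⟩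
  simpa [coe_basisOfTopLeSpanOfCardEqFinrank] using bracket_rightPow_eq hLeib hzero i j

/-- Up to isomorphism there is exactly one non-Lie nulfiliform complex Leibniz
algebra of dimension `n`: every such algebra admits a basis `e₁, …, e_n` with
`[e_i, e_1] = e_{i+1}` for `1 ≤ i ≤ n − 1`, all other products zero. -/
theorem stmt_11 {L : Type*} [AddCommGroup L] [Module ℂ L] [FiniteDimensional ℂ L]
    (b : L →ₗ[ℂ] L →ₗ[ℂ] L)
    (hLeib : ∀ x y z : L, b x (b y z) = b (b x y) z - b (b x z) y)
    (n : ℕ) (hn : 0 < n) (hdim : Module.finrank ℂ L = n)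
    (hnul : ∀ i : ℕ, 2 ≤ i → i ≤ n + 1 →
      Module.finrank ℂ (lcs b (i - 1)) + i = n + 1)
    (hnonLie : ∃ x : L, b x x ≠ 0) :
    ∃ e : Module.Basis (Fin n) ℂ L, ∀ i j : Fin n,
      b (e i) (e j) =
        if (j : ℕ) = 0 then
          (if h : (i : ℕ) + 1 < n then e ⟨(i : ℕ) + 1, h⟩ else 0)
        else 0 :=
  stmt_11_general b hLeib n hn hdim hnul
end

section
/- The 4-dimensional complex algebras ∇(α,1) defined by [e₁,e₁]=e₃, [e₁,e₂]=α e₄, [e₂,e₁]=e₃, [e₂,e₂]=e₄, [e₃,e₁]=e₄ satisfy: for every α ≠ 1, ∇(α,1) is isomorphic to ∇(0,1); and ∇(1,1) is not isomorphic to ∇(0,1). -/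
/-- The bracket of `∇(α,1)`: `[e₁,e₁]=e₃, [e₁,e₂]=α e₄, [e₂,e₁]=e₃,
[e₂,e₂]=e₄, [e₃,e₁]=e₄` (basis indexed `0,…,3`), other products zero. -/
def nabla (α : ℂ) (x y : Fin 4 → ℂ) : Fin 4 → ℂ :=
  ![0, 0, x 0 * y 0 + x 1 * y 0, α * (x 0 * y 1) + x 1 * y 1 + x 2 * y 0]

/-- An isomorphism of the bracket algebras `∇(α,1)` and `∇(β,1)`. -/
def nablaIso (α β : ℂ) : Prop :=
  ∃ f : (Fin 4 → ℂ) ≃ₗ[ℂ] (Fin 4 → ℂ),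
    ∀ x y, f (nabla α x y) = nabla β (f x) (f y)

/-- The linear map `∇(0,1) → ∇(α,1)` (a bracket isomorphism when `α ≠ 1`). -/
def gmap (α : ℂ) : (Fin 4 → ℂ) →ₗ[ℂ] (Fin 4 → ℂ) where
  toFun x := ![(1-α) * x 0,
    -α*(1-α) * x 0 + (1-α)^2 * x 1,
    α*(1-α)^2 * x 1 + (1-α)^3 * x 2,
    (1-α)^4 * x 3]
  map_add' x y := by
    funext i
    fin_cases i <;> simp [Pi.add_apply] <;> ring
  map_smul' c x := by
    funext i
    fin_cases i <;> simp [Pi.smul_apply, smul_eq_mul] <;> ring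

lemma gmap_bracket (α : ℂ) (x y : Fin 4 → ℂ) :
    gmap α (nabla 0 x y) = nabla α (gmap α x) (gmap α y) := by
  funext i
  fin_cases i <;> simp [gmap, nabla] <;> ring

lemma gmap_injective (α : ℂ) (h : (1:ℂ) - α ≠ 0) :
    Function.Injective (gmap α) := by
  rw [← LinearMap.ker_eq_bot, LinearMap.ker_eq_bot']
  intro x hx
  have h0 := congrFun hx 0
  have h1 := congrFun hx 1
  have h2 := congrFun hx 2
  have h3 := congrFun hx 3
  simp [gmap] at h0 h1 h2 h3
  have hx0 : x 0 = 0 := by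
    rcases h0 with h0 | h0
    · exact absurd h0 h
    · exact h0
  have hx1 : x 1 = 0 := by
    rw [hx0] at h1
    simp at h1
    rcases h1 with h1 | h1
    · exact absurd h1 h
    · exact h1
  have hx2 : x 2 = 0 := by
    rw [hx1] at h2
    simp at h2
    rcases h2 with h2 | h2
    · exact absurd h2 h
    · exact h2
  have hx3 : x 3 = 0 := by
    rcases h3 with h3 | h3
    · exact absurd h3 h
    · exact h3
  funext i
  fin_cases i <;> assumption

/-- For every `α ≠ 1`, `∇(α,1)` is isomorphic to `∇(0,1)`, while `∇(1,1)`
is not isomorphic to `∇(0,1)`. -/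
theorem stmt_12 :
    (∀ α : ℂ, α ≠ 1 → nablaIso α 0) ∧ ¬ nablaIso 1 0 := by
  constructor
  · intro α hα
    have h : (1:ℂ) - α ≠ 0 := sub_ne_zero.mpr (Ne.symm hα)
    have hinj := gmap_injective α h
    have hbij : Function.Bijective (gmap α) :=
      ⟨hinj, (LinearMap.injective_iff_surjective).mp hinj⟩
    set e : (Fin 4 → ℂ) ≃ₗ[ℂ] (Fin 4 → ℂ) := LinearEquiv.ofBijective _ hbij with he
    have he_apply : ∀ x, e x = gmap α x := fun _ => rfl
    refine ⟨e.symm, ?_⟩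
    intro x y
    apply e.injective
    rw [e.apply_symm_apply, he_apply, gmap_bracket,
      ← he_apply (e.symm x), ← he_apply (e.symm y),
      e.apply_symm_apply, e.apply_symm_apply]
  · rintro ⟨f, hf⟩
    set u : Fin 4 → ℂ := ![1, -1, 0, 0] with hu
    set v : Fin 4 → ℂ := ![0, 0, 0, 1] with hv
    have hub : ∀ y, nabla 1 u y = 0 := by
      intro y; funext i; fin_cases i <;> simp [nabla, hu] <;> ring
    have hvb : ∀ y, nabla 1 v y = 0 := by
      intro y; funext i; fin_cases i <;> simp [nabla, hv]
    have key : ∀ w : Fin 4 → ℂ, (∀ y, nabla 1 w y = 0) →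
        (f w) 0 = 0 ∧ (f w) 1 = 0 ∧ (f w) 2 = 0 := by
      intro w hw
      have hz : ∀ z : Fin 4 → ℂ, nabla 0 (f w) z = 0 := by
        intro z
        have := hf w (f.symm z)
        rw [hw (f.symm z), f.apply_symm_apply] at this
        rw [← this]
        exact f.map_zero
      have h1 := congrFun (hz ![1,0,0,0]) 2
      have h2 := congrFun (hz ![1,0,0,0]) 3
      have h3 := congrFun (hz ![0,1,0,0]) 3
      simp [nabla] at h1 h2 h3
      constructor
      · linear_combination h1 - h3
      · exact ⟨h3, h2⟩
    obtain ⟨hu0, hu1, hu2⟩ := key u hub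
    obtain ⟨hv0, hv1, hv2⟩ := key v hvb
    set s : ℂ := (f u) 3 with hs
    set t : ℂ := (f v) 3 with ht
    have hw0 : f (t • u - s • v) = 0 := by
      rw [map_sub, map_smul, map_smul]
      funext i
      fin_cases i <;>
        simp [Pi.sub_apply, Pi.smul_apply, smul_eq_mul, hu0, hu1, hu2,
          hv0, hv1, hv2, ← hs, ← ht] <;> ring
    have hw : t • u - s • v = 0 :=
      f.injective (by rw [hw0]; exact (map_zero f).symm)
    have ht0 : t = 0 := by
      have := congrFun hw 0
      simpa [hu, hv, Pi.sub_apply, Pi.smul_apply, smul_eq_mul] using this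
    have hfv : f v = 0 := by
      funext i
      fin_cases i <;>
        simp [hv0, hv1, hv2, ← ht, ht0]
    have : v = 0 := f.injective (by rw [hfv]; exact (map_zero f).symm)
    have := congrFun this 3
    simp [hv] at this
end
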